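/- arXiv:1910.10558 — 4 statements merged into one kernel-verified Lean document; each statement's English description precedes it below -/
import Mathlib

section
/- Every closed subgroup of the additive group ℚ_p of p-adic numbers is equal to {0}, ℚ_p itself, or p^n ℤ_p for some integer n, where ℤ_p = {x ∈ ℚ_p : |x|_p ≤ 1}. -/
lemma mem_of_norm_le_padic {p : ℕ} [Fact p.Prime] (H : AddSubgroup ℚ_[p])
    (hH : IsClosed (H : Set ℚ_[p])) {x : ℚ_[p]} (hx : x ∈ H)
    {y : ℚ_[p]} (hy : ‖y‖ ≤ ‖x‖) : y ∈ H := by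
  rcases eq_or_ne x 0 with rfl | hx0
  · simp only [norm_zero] at hy
    have : y = 0 := norm_eq_zero.mp (le_antisymm hy (norm_nonneg _))
    simpa [this] using H.zero_mem
  · have hxpos : (0:ℝ) < ‖x‖ := norm_pos_iff.mpr hx0
    have hu : ‖y / x‖ ≤ 1 := by
      rw [norm_div, div_le_one hxpos]; exact hy
    have hcl : y ∈ closure (H : Set ℚ_[p]) := by
      rw [Metric.mem_closure_iff]
      intro ε hε
      obtain ⟨m, hm⟩ := Metric.denseRange_iff.mp (PadicInt.denseRange_intCast)
        (⟨y / x, hu⟩ : ℤ_[p]) (ε / ‖x‖) (div_pos hε hxpos)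
      refine ⟨m • x, H.zsmul_mem hx m, ?_⟩
      have hdist : dist (show ℤ_[p] from ⟨y / x, hu⟩) (m : ℤ_[p]) = ‖y / x - (m : ℚ_[p])‖ := by
        rw [dist_eq_norm, PadicInt.norm_def]
        norm_cast
      rw [hdist] at hm
      have : dist y (m • x) = ‖x‖ * ‖y / x - (m : ℚ_[p])‖ := by
        rw [dist_eq_norm, ← norm_mul]
        congr 1
        field_simp
        ring
      rw [this]
      calc ‖x‖ * ‖y / x - (m : ℚ_[p])‖ < ‖x‖ * (ε / ‖x‖) := by
            exact (mul_lt_mul_iff_right₀ hxpos).mpr hm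
        _ = ε := by field_simp
    rwa [hH.closure_eq] at hcl

/-- Every closed subgroup of ℚ_p is `{0}`, `ℚ_p`, or `p^n ℤ_p` for some integer `n`. -/
theorem closed_addSubgroup_padic (p : ℕ) [Fact p.Prime] (H : AddSubgroup ℚ_[p])
    (hH : IsClosed (H : Set ℚ_[p])) :
    H = ⊥ ∨ H = ⊤ ∨ ∃ n : ℤ, (H : Set ℚ_[p]) = {x : ℚ_[p] | ‖x‖ ≤ (p : ℝ) ^ (-n)} := by
  have hp1 : (1:ℝ) < (p:ℝ) := by exact_mod_cast (Fact.out : p.Prime).one_lt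
  rcases eq_or_ne H ⊥ with rfl | hbot
  · exact Or.inl rfl
  have hne : ∃ x ∈ H, x ≠ 0 := by
    by_contra h
    push_neg at h
    exact hbot (le_antisymm (fun x hx => by simpa using h x hx) bot_le)
  by_cases hub : ∀ m : ℤ, ∃ x ∈ H, x ≠ 0 ∧ x.valuation ≤ m
  · -- H = ⊤
    refine Or.inr (Or.inl ?_)
    ext y
    simp only [AddSubgroup.mem_top, iff_true]
    rcases eq_or_ne y 0 with rfl | hy0
    · exact H.zero_mem
    obtain ⟨x, hxH, hx0, hxv⟩ := hub y.valuation
    refine mem_of_norm_le_padic H hH hxH ?_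
    rw [Padic.norm_eq_zpow_neg_valuation hx0, Padic.norm_eq_zpow_neg_valuation hy0]
    exact zpow_le_zpow_right₀ hp1.le (neg_le_neg hxv)
  · push_neg at hub
    obtain ⟨m, hm⟩ := hub
    -- valuations bounded below; take least valuation
    obtain ⟨n, ⟨x₀, hx₀H, hx₀0, hx₀v⟩, hleast⟩ :=
      Int.exists_least_of_bdd (P := fun v => ∃ x ∈ H, x ≠ 0 ∧ x.valuation = v)
        ⟨m, fun v ⟨x, hxH, hx0, hxv⟩ => hxv ▸ (hm x hxH hx0).le⟩
        (by obtain ⟨x, hxH, hx0⟩ := hne; exact ⟨x.valuation, x, hxH, hx0, rfl⟩)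
    refine Or.inr (Or.inr ⟨n, ?_⟩)
    ext y
    simp only [SetLike.mem_coe, Set.mem_setOf_eq]
    constructor
    · intro hyH
      rcases eq_or_ne y 0 with rfl | hy0
      · rw [norm_zero]; positivity
      · rw [Padic.norm_eq_zpow_neg_valuation hy0]
        exact zpow_le_zpow_right₀ hp1.le
          (neg_le_neg (hleast _ ⟨y, hyH, hy0, rfl⟩))
    · intro hy
      refine mem_of_norm_le_padic H hH hx₀H ?_
      rw [Padic.norm_eq_zpow_neg_valuation hx₀0, hx₀v]
      exact hy
end

section
/- Let G be a locally compact Hausdorff group and let x ∈ G be an element of infinite order. Then either the cyclic subgroup generated by x is discrete and infinite, or the closure of the cyclic subgroup generated by x is a compact infinite abelian group. -/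
/-!
If `x ^ n` returns to a compact neighbourhood `K` of `1` only finitely often, then `1` is isolated
in `⟨x⟩`. Otherwise `x ^ n` has a cluster point as `n → +∞` or as `n → -∞` (replace `x` by `x⁻¹`).
The forward cluster points form a closed set invariant under multiplication by `x`, hence by
`closure ⟨x⟩`; being nonempty, it contains all of `closure ⟨x⟩`. By compactness, finitely many
translates `x ^ m • interior K` with `1 ≤ m ≤ N` cover `closure ⟨x⟩ ∩ K`, so from every return
one steps down to an earlier return at most `N` below it. The returns thus meet every window
`[n, n + N]`, and `⟨x⟩ ⊆ ⋃_{0 ≤ i ≤ N} x ^ (-i) • K` is relatively compact.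
-/

open Filter Set Topology

namespace Int

theorem exists_mem_Icc_of_frequently_atTop {P : ℤ → Prop} {N : ℤ}
    (hP : ∃ᶠ r in atTop, P r) (hstep : ∀ r, P r → ∃ m ∈ Icc 1 N, P (r - m)) (n : ℤ) :
    ∃ r ∈ Icc n (n + N), P r := by
  obtain ⟨r, ⟨hnr, hr⟩, hmin⟩ :=
    exists_least_of_bdd ⟨n, fun r hr => hr.1⟩ ((frequently_atTop.1 hP) n)
  refine ⟨r, ⟨hnr, ?_⟩, hr⟩
  by_contra! hfar
  obtain ⟨m, ⟨hm1, hmN⟩, hrm⟩ := hstep r hr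
  have := hmin (r - m) ⟨by omega, hrm⟩
  omega

end Int

section

variable {G : Type*} [Group G] [TopologicalSpace G] [IsTopologicalGroup G] {x z : G}

theorem Subgroup.discreteTopology_of_finite_inter_nhds_one [T1Space G] {H : Subgroup G}
    {K : Set G} (hK : K ∈ 𝓝 1) (hfin : (K ∩ H).Finite) : DiscreteTopology H := by
  have hU : K \ ((K ∩ H) \ {1}) ∈ 𝓝 (1 : G) :=
    sdiff_mem hK ((hfin.sdiff).isClosed.compl_mem_nhds fun h => h.2 rfl)
  rw [discreteTopology_iff_isOpen_singleton_one, isOpen_induced_iff]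
  refine ⟨interior (K \ ((K ∩ H) \ {1})), isOpen_interior, ?_⟩
  ext ⟨h, hH⟩
  simp only [mem_preimage, mem_singleton_iff, Subgroup.mk_eq_one]
  refine ⟨fun hh => ?_, by rintro rfl; exact mem_interior_iff_mem_nhds.2 hU⟩
  by_contra hne
  exact (interior_subset hh).2 ⟨⟨(interior_subset hh).1, hH⟩, hne⟩

theorem discreteTopology_zpowers_of_finite [T1Space G] {K : Set G} (hK : K ∈ 𝓝 1)
    (hfin : {n : ℤ | x ^ n ∈ K}.Finite) :
    DiscreteTopology (Subgroup.zpowers x) := by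
  refine Subgroup.discreteTopology_of_finite_inter_nhds_one hK ((hfin.image (x ^ ·)).subset ?_)
  rintro _ ⟨hK, n, rfl⟩
  exact ⟨n, hK, rfl⟩

theorem commute_of_mem_closure_zpowers [T2Space G] {a b : G}
    (ha : a ∈ closure (Subgroup.zpowers x : Set G))
    (hb : b ∈ closure (Subgroup.zpowers x : Set G)) : Commute a b := by
  let _ := (Subgroup.zpowers x).commGroupTopologicalClosure fun ⟨_, i, hi⟩ ⟨_, j, hj⟩ =>
    Subtype.ext (hi ▸ hj ▸ zpow_mul_comm x i j)
  exact congrArg Subtype.val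
    (mul_comm (⟨a, ha⟩ : (Subgroup.zpowers x).topologicalClosure) ⟨b, hb⟩)

theorem MapClusterPt.zpow_mul (h : MapClusterPt z atTop (x ^ · : ℤ → G)) (j : ℤ) :
    MapClusterPt (x ^ j * z) atTop (x ^ · : ℤ → G) := by
  have hshift : MapClusterPt (x ^ j * z) atTop ((x ^ · : ℤ → G) ∘ (j + ·)) := by
    simpa [Function.comp_def, zpow_add] using
      h.continuousAt_comp (continuous_const_mul (x ^ j)).continuousAt
  exact hshift.of_comp (tendsto_atTop_add_const_left _ j tendsto_id)

theorem MapClusterPt.mul_of_mem_closure_zpowers (h : MapClusterPt z atTop (x ^ · : ℤ → G))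
    {a : G} (ha : a ∈ closure (Subgroup.zpowers x : Set G)) :
    MapClusterPt (a * z) atTop (x ^ · : ℤ → G) := by
  have hclosed : IsClosed {a : G | MapClusterPt (a * z) atTop (x ^ · : ℤ → G)} :=
    isClosed_setOfPred_clusterPt.preimage (continuous_mul_const z)
  refine closure_minimal ?_ hclosed ha
  rintro _ ⟨j, rfl⟩
  exact h.zpow_mul j

theorem MapClusterPt.of_mem_closure_zpowers (h : MapClusterPt z atTop (x ^ · : ℤ → G))
    {a : G} (ha : a ∈ closure (Subgroup.zpowers x : Set G)) :
    MapClusterPt a atTop (x ^ · : ℤ → G) := by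
  have hz : z ∈ (Subgroup.zpowers x).topologicalClosure :=
    closure_mono (image_subset_range _ _) (mapClusterPt_atTop_iff_forall_mem_closure.1 h 0)
  simpa using h.mul_of_mem_closure_zpowers
    ((Subgroup.zpowers x).topologicalClosure.mul_mem ha (inv_mem hz))

theorem exists_zpow_inv_mul_mem_of_mapClusterPt {Z V : Set G} (hZ : IsCompact Z) (hV : IsOpen V)
    (hV1 : (1 : G) ∈ V) (hcl : ∀ g ∈ Z, MapClusterPt g atTop (x ^ · : ℤ → G)) :
    ∃ N : ℤ, ∀ g ∈ Z, ∃ m ∈ Icc 1 N, (x ^ m)⁻¹ * g ∈ V := by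
  let U : ℤ → Set G := fun N => ⋃ m ∈ Icc 1 N, (fun g => (x ^ m)⁻¹ * g) ⁻¹' V
  have hUopen (N : ℤ) : IsOpen (U N) :=
    isOpen_biUnion fun m _ => hV.preimage (continuous_const_mul _)
  have hUmono : Monotone U := fun N N' hN =>
    biUnion_subset_biUnion_left (Icc_subset_Icc_right hN)
  have hcover : Z ⊆ ⋃ N, U N := by
    intro g hg
    have hnhds : {h : G | h⁻¹ * g ∈ V} ∈ 𝓝 g :=
      (continuous_inv.mul continuous_const).continuousAt.preimage_mem_nhds
        (by simpa using hV.mem_nhds hV1)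
    obtain ⟨m, hm1, hm⟩ :=
      frequently_atTop.1 (mapClusterPt_iff_frequently.1 (hcl g hg) _ hnhds) 1
    exact mem_iUnion.2 ⟨m, mem_iUnion₂.2 ⟨m, ⟨hm1, le_rfl⟩, hm⟩⟩
  obtain ⟨N, hN⟩ := hZ.elim_directed_cover U hUopen hcover hUmono.directed_le
  exact ⟨N, fun g hg => by simpa [U] using hN hg⟩

theorem isCompact_closure_zpowers_of_exists_mem_Icc {K : Set G} (hK : IsCompact K) (N : ℤ)
    (h : ∀ n : ℤ, ∃ r ∈ Icc n (n + N), x ^ r ∈ K) :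
    IsCompact (closure (Subgroup.zpowers x : Set G)) := by
  have hC : IsCompact (⋃ i ∈ Icc 0 N, (fun g => x ^ (-i) * g) '' K) :=
    (finite_Icc 0 N).isCompact_biUnion fun i _ => hK.image (continuous_const_mul _)
  refine hC.closure_of_subset ?_
  rintro _ ⟨n, rfl⟩
  obtain ⟨r, ⟨hnr, hrN⟩, hr⟩ := h n
  refine mem_iUnion₂.2 ⟨r - n, ⟨by omega, by omega⟩, x ^ r, hr, ?_⟩
  simp only [← zpow_add]
  congr 1
  ring

theorem MapClusterPt.isCompact_closure_zpowers [LocallyCompactSpace G]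
    (h : MapClusterPt z atTop (x ^ · : ℤ → G)) :
    IsCompact (closure (Subgroup.zpowers x : Set G)) := by
  obtain ⟨K, hKc, hK1⟩ := exists_compact_mem_nhds (1 : G)
  obtain ⟨N, hN⟩ := exists_zpow_inv_mul_mem_of_mapClusterPt (hKc.inter_left isClosed_closure)
    isOpen_interior (mem_interior_iff_mem_nhds.2 hK1) fun g hg => h.of_mem_closure_zpowers hg.1
  refine isCompact_closure_zpowers_of_exists_mem_Icc hKc N
    (Int.exists_mem_Icc_of_frequently_atTop ?_ fun r hr => ?_)
  · exact mapClusterPt_iff_frequently.1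
      (h.of_mem_closure_zpowers (subset_closure (Subgroup.one_mem _))) K hK1
  · obtain ⟨m, hm, hmr⟩ := hN (x ^ r) ⟨subset_closure ⟨r, rfl⟩, hr⟩
    refine ⟨m, hm, interior_subset ?_⟩
    rwa [← zpow_neg, ← zpow_add, neg_add_eq_sub] at hmr

end

/-- For an element `x` of infinite order in a locally compact Hausdorff group, either the cyclic
subgroup generated by `x` is discrete and infinite, or its closure is a compact infinite
abelian group. -/
theorem zpowers_discrete_or_closure_compact (G : Type*) [Group G] [TopologicalSpace G]
    [IsTopologicalGroup G] [LocallyCompactSpace G] [T2Space G] (x : G) (hx : ¬ IsOfFinOrder x) :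
    (DiscreteTopology (Subgroup.zpowers x) ∧ (Subgroup.zpowers x : Set G).Infinite) ∨
      (IsCompact (closure (Subgroup.zpowers x : Set G)) ∧
        (closure (Subgroup.zpowers x : Set G)).Infinite ∧
        ∀ a ∈ closure (Subgroup.zpowers x : Set G), ∀ b ∈ closure (Subgroup.zpowers x : Set G),
          a * b = b * a) := by
  have hinf : (Subgroup.zpowers x : Set G).Infinite := by
    rw [Subgroup.coe_zpowers]
    exact infinite_range_of_injective (injective_zpow_iff_not_isOfFinOrder.2 hx)
  obtain ⟨K, hKc, hK1⟩ := exists_compact_mem_nhds (1 : G)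
  rcases Set.finite_or_infinite {n : ℤ | x ^ n ∈ K} with hfin | hret
  · exact .inl ⟨discreteTopology_zpowers_of_finite hK1 hfin, hinf⟩
  refine .inr ⟨?_, hinf.mono subset_closure,
    fun a ha b hb => (commute_of_mem_closure_zpowers ha hb).eq⟩
  obtain ⟨z, -, hz⟩ :=
    hKc.exists_mapClusterPt_of_frequently (frequently_cofinite_iff_infinite.2 hret)
  rw [MapClusterPt, Int.cofinite_eq, map_sup, clusterPt_sup] at hz
  rcases hz with hbot | htop
  · have hinv : MapClusterPt z atTop ((x ^ · : ℤ → G) ∘ Neg.neg) := by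
      rwa [mapClusterPt_comp, map_neg_atTop]
    simp only [Function.comp_def, ← inv_zpow'] at hinv
    simpa using hinv.isCompact_closure_zpowers
  · exact MapClusterPt.isCompact_closure_zpowers htop
end

section
/- Let p₁, …, pₙ be distinct primes and G = ℚ_{p₁} × ⋯ × ℚ_{pₙ} (additive group, product topology). Then every closed subgroup H of G is a product H₁ × ⋯ × Hₙ where each Hᵢ is a closed subgroup of ℚ_{pᵢ}; in fact Hᵢ = H ∩ ℚ_{pᵢ} equals the image of H under the i-th projection. -/
/-!
If `p₁, …, pₙ` are distinct, the Chinese remainder theorem gives integers `m_k` with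
`m_k ≡ 1 mod p_i^k` and `m_k ≡ 0 mod p_j^k` for `j ≠ i`. For `x ∈ H`, the multiples `m_k • x`
then converge to the element with `i`-th coordinate `x i` and all others `0`, which therefore lies
in the closed subgroup `H`. A subgroup of a finite product containing the coordinate pieces of
each of its elements is the product of its projections.
-/

open Filter Topology

theorem Padic.tendsto_intCast_of_pow_dvd_sub {p : ℕ} [Fact p.Prime] {m : ℕ → ℤ} {c : ℤ}
    (h : ∀ k, (p : ℤ) ^ k ∣ m k - c) :
    Tendsto (fun k => (m k : ℚ_[p])) atTop (𝓝 c) := by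
  have hbound : ∀ k, ‖(m k : ℚ_[p]) - c‖ ≤ ((p : ℝ)⁻¹) ^ k := fun k => by
    have := (Padic.norm_int_le_pow_iff_dvd (p := p) (m k - c) k).mpr (h k)
    rw [zpow_neg, zpow_natCast, ← inv_pow] at this
    exact_mod_cast this
  have hp : (1 : ℝ) < p := by exact_mod_cast (Fact.out : p.Prime).one_lt
  exact tendsto_iff_norm_sub_tendsto_zero.mpr <| squeeze_zero (fun _ => norm_nonneg _) hbound
    (tendsto_pow_atTop_nhds_zero_of_lt_one (by positivity) (inv_lt_one_of_one_lt₀ hp))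

theorem exists_int_pow_dvd_sub_single {ι : Type*} [Fintype ι] [DecidableEq ι] {p : ι → ℕ}
    (hprime : ∀ i, (p i).Prime) (hp : Function.Injective p) (i : ι) (k : ℕ) :
    ∃ m : ℤ, ∀ j, (p j : ℤ) ^ k ∣ m - (Pi.single i 1 : ι → ℤ) j := by
  set Q : ℤ := ∏ j ∈ Finset.univ.erase i, (p j : ℤ)
  have hcop : IsCoprime (p i : ℤ) Q := IsCoprime.prod_right fun j hj =>
    Nat.isCoprime_iff_coprime.mpr <| (Nat.coprime_primes (hprime i) (hprime j)).mpr
      fun h => (Finset.mem_erase.mp hj).1 (hp h.symm)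
  obtain ⟨a, b, hab⟩ := hcop.pow (m := k) (n := k)
  refine ⟨b * Q ^ k, fun j => ?_⟩
  rcases eq_or_ne j i with rfl | hj
  · exact ⟨-a, by rw [Pi.single_eq_same]; linarith⟩
  · have hpQ : (p j : ℤ) ∣ Q := Finset.dvd_prod_of_mem _ (by simp [hj])
    simpa [hj] using dvd_mul_of_dvd_right (pow_dvd_pow_of_dvd hpQ k) b

theorem Padic.pi_single_mem_of_isClosed {ι : Type*} [Fintype ι] [DecidableEq ι] {p : ι → ℕ}
    [∀ i, Fact (p i).Prime] (hp : Function.Injective p) {H : AddSubgroup (∀ i, ℚ_[p i])}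
    (hH : IsClosed (H : Set (∀ i, ℚ_[p i]))) {x : ∀ i, ℚ_[p i]} (hx : x ∈ H) (i : ι) :
    Pi.single i (x i) ∈ H := by
  choose m hm using exists_int_pow_dvd_sub_single (fun j => (Fact.out : (p j).Prime)) hp i
  refine hH.mem_of_tendsto (b := atTop) (f := fun k => m k • x)
    (tendsto_pi_nhds.mpr fun j => ?_) (Eventually.of_forall fun k => H.zsmul_mem hx (m k))
  have hlim := (Padic.tendsto_intCast_of_pow_dvd_sub fun k => hm k j).mul_const (x j)
  rcases eq_or_ne j i with rfl | hj
  · simpa [zsmul_eq_mul] using hlim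
  · simpa [zsmul_eq_mul, hj] using hlim

namespace AddSubgroup

variable {ι : Type*} [DecidableEq ι] {G : ι → Type*}

theorem eq_pi_map_eval_of_single_mem [Fintype ι] [∀ i, AddCommGroup (G i)]
    {H : AddSubgroup (∀ i, G i)} (h : ∀ x ∈ H, ∀ i, Pi.single i (x i) ∈ H) :
    H = pi Set.univ fun i => H.map (Pi.evalAddMonoidHom G i) := by
  ext x
  refine ⟨fun hx i _ => ⟨x, hx, rfl⟩, fun hx => ?_⟩
  rw [← Finset.univ_sum_single x]
  refine H.sum_mem fun i _ => ?_
  obtain ⟨y, hy, hyx⟩ := hx i (Set.mem_univ i)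
  simpa [← hyx] using h y hy i

theorem map_eval_eq_comap_single_of_single_mem [∀ i, AddGroup (G i)]
    {H : AddSubgroup (∀ i, G i)} (h : ∀ x ∈ H, ∀ i, Pi.single i (x i) ∈ H) (i : ι) :
    H.map (Pi.evalAddMonoidHom G i) = H.comap (AddMonoidHom.single G i) := by
  ext x
  refine ⟨?_, fun hx => ⟨Pi.single i x, hx, by simp⟩⟩
  rintro ⟨y, hy, rfl⟩
  exact h y hy i

end AddSubgroup

/-- Every closed subgroup of a finite product of `ℚ_p`'s for distinct primes `p` is the product
of its projections, and each projection equals the intersection with the corresponding factor. -/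
theorem closed_addSubgroup_pi_padic (n : ℕ) (p : Fin n → ℕ) [∀ i, Fact (p i).Prime]
    (hp : Function.Injective p) (H : AddSubgroup (∀ i, ℚ_[p i]))
    (hH : IsClosed (H : Set (∀ i, ℚ_[p i]))) :
    H = AddSubgroup.pi Set.univ (fun i => H.map (Pi.evalAddMonoidHom (fun j => ℚ_[p j]) i)) ∧
      ∀ i, H.map (Pi.evalAddMonoidHom (fun j => ℚ_[p j]) i) =
        H.comap (AddMonoidHom.single (fun j => ℚ_[p j]) i) := by
  have hsingle : ∀ x ∈ H, ∀ i, Pi.single i (x i) ∈ H := fun _ hx i =>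
    Padic.pi_single_mem_of_isClosed hp hH hx i
  exact ⟨H.eq_pi_map_eval_of_single_mem hsingle,
    H.map_eval_eq_comap_single_of_single_mem hsingle⟩
end

section
/- Let F be a nontrivial finite group and G = F^{(-ℕ)} × F^{ℕ₀} the restricted-times-full product with the right-shift automorphism T((x_n)_{n∈ℤ}) = (x_{n-1})_{n∈ℤ}. Then for every closed subgroup H of the compact group F^{ℕ₀} (viewed inside G), T^n(H) converges to the trivial subgroup as n → ∞, and the set of such closed subgroups H is uncountable. -/
/-!
A neighbourhood of `1` in `∏_{k ∈ ℤ} F` constrains only finitely many coordinates, all below some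
`M`; once `n > M` the shift by `n` moves only negative coordinates of `x` onto them, and these are
trivial for every `x` in `F^{ℕ₀}`. For uncountability, the subgroups of elements supported in
`S ⊆ ℕ₀` are closed and pairwise distinct, since `Pi.mulSingle k a` with `a ≠ 1` detects `k ∈ S`.
-/

open Filter Topology

instance : Uncountable (Set ℕ) :=
  ⟨fun _ => let ⟨u, hu⟩ := exists_injective_nat (Set ℕ); Function.cantor_injective u hu⟩

theorem eventually_shift_mem_nhds_one {F : Type*} [One F] [TopologicalSpace F]
    {U : Set (ℤ → F)} (hU : U ∈ 𝓝 1) :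
    ∀ᶠ n : ℕ in atTop, ∀ x : ℤ → F, (∀ k < 0, x k = 1) → (fun k => x (k - n)) ∈ U := by
  rw [nhds_pi, mem_pi] at hU
  obtain ⟨I, hI, t, ht, hIt⟩ := hU
  obtain ⟨M, hM⟩ := hI.bddAbove
  filter_upwards [tendsto_natCast_atTop_atTop.eventually_gt_atTop M] with n hn x hx
  refine hIt fun k hk => ?_
  have hneg : k - n < 0 := by linarith [hM hk]
  exact (hx _ hneg).symm ▸ mem_of_mem_nhds (ht k)

namespace Subgroup

variable {ι F : Type*} [Group F]

theorem isClosed_pi_bot [TopologicalSpace F] [T1Space F] (I : Set ι) :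
    IsClosed ((pi I fun _ => ⊥ : Subgroup (ι → F)) : Set (ι → F)) := by
  rw [coe_pi]
  exact isClosed_set_pi fun _ _ => isClosed_singleton

theorem pi_compl_bot_injective [Nontrivial F] :
    Function.Injective (fun S : Set ι => pi Sᶜ (fun _ => (⊥ : Subgroup F))) := by
  classical
  intro S T (hST : pi Sᶜ _ = pi Tᶜ _)
  obtain ⟨a, ha⟩ := exists_ne (1 : F)
  have mulSingle_mem_iff (R : Set ι) (i : ι) :
      Pi.mulSingle i a ∈ pi Rᶜ (fun _ => (⊥ : Subgroup F)) ↔ i ∈ R := by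
    simp [mulSingle_mem_pi, ha]
  ext i
  rw [← mulSingle_mem_iff S, ← mulSingle_mem_iff T, hST]

end Subgroup

theorem shift_contracts_closed_subgroups_general (F : Type*) [Group F] [Nontrivial F]
    [TopologicalSpace F] [DiscreteTopology F] :
    (∀ H : Subgroup (∀ _ : ℤ, F), IsClosed (H : Set (∀ _ : ℤ, F)) →
      (∀ x ∈ H, ∀ k : ℤ, k < 0 → x k = 1) →
      ∀ U ∈ nhds (1 : ∀ _ : ℤ, F), ∀ᶠ n : ℕ in Filter.atTop,
        (fun x : ∀ _ : ℤ, F => fun k : ℤ => x (k - n)) '' (H : Set (∀ _ : ℤ, F)) ⊆ U) ∧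
    ¬ Set.Countable {H : Subgroup (∀ _ : ℤ, F) |
        IsClosed (H : Set (∀ _ : ℤ, F)) ∧ ∀ x ∈ H, ∀ k : ℤ, k < 0 → x k = 1} := by
  refine ⟨fun H _ hH U hU => (eventually_shift_mem_nhds_one hU).mono ?_, fun hcount => ?_⟩
  · rintro n hn _ ⟨x, hx, rfl⟩
    exact hn x (hH x hx)
  · let supportedIn (S : Set ℕ) : Subgroup (ℤ → F) :=
      Subgroup.pi (Nat.cast '' S)ᶜ (fun _ => ⊥)
    have supportedIn_mem : Set.MapsTo supportedIn Set.univ {H | IsClosed (H : Set (ℤ → F)) ∧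
        ∀ x ∈ H, ∀ k : ℤ, k < 0 → x k = 1} := fun S _ =>
      ⟨Subgroup.isClosed_pi_bot _, fun x hx k hk =>
        hx k fun ⟨m, _, hm⟩ => by omega⟩
    have supportedIn_injective : Function.Injective supportedIn :=
      Subgroup.pi_compl_bot_injective.comp (Set.image_injective.2 Nat.cast_injective)
    exact Set.not_countable_univ
      (supportedIn_mem.countable_of_injOn supportedIn_injective.injOn hcount)

/-- For a nontrivial finite group `F` with the right-shift `T` on `F^{(-ℕ)} × F^{ℕ₀}` (realised
inside the full product `∏_{k ∈ ℤ} F`): every closed subgroup `H` of `F^{ℕ₀}` (i.e. a closed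
subgroup of the product whose elements vanish on negative coordinates) satisfies
`T^n(H) → {1}`, and the collection of such subgroups is uncountable. -/
theorem shift_contracts_closed_subgroups (F : Type*) [Group F] [Finite F] [Nontrivial F]
    [TopologicalSpace F] [DiscreteTopology F] :
    (∀ H : Subgroup (∀ _ : ℤ, F), IsClosed (H : Set (∀ _ : ℤ, F)) →
      (∀ x ∈ H, ∀ k : ℤ, k < 0 → x k = 1) →
      ∀ U ∈ nhds (1 : ∀ _ : ℤ, F), ∀ᶠ n : ℕ in Filter.atTop,
        (fun x : ∀ _ : ℤ, F => fun k : ℤ => x (k - n)) '' (H : Set (∀ _ : ℤ, F)) ⊆ U) ∧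
    ¬ Set.Countable {H : Subgroup (∀ _ : ℤ, F) |
        IsClosed (H : Set (∀ _ : ℤ, F)) ∧ ∀ x ∈ H, ∀ k : ℤ, k < 0 → x k = 1} :=
  shift_contracts_closed_subgroups_general F
end
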